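/- If w = (a,b) ∈ θ with a and b incomparable, or w a singleton, then End(P(w)) ≅ k. If w = (a,b) with a < b, then End(P(w)) is isomorphic to k[x]/(x²), namely the algebra of 2×2 upper triangular matrices of the form [[c,d],[0,c]]. Consequently, P(w) is indecomposable in all cases. -/

import Mathlib

open scoped Classical

/-! ## Posets with involution and their vector-space representations -/

structure PosetInv (P : Type) [PartialOrder P] where
  σ : P → P
  invol : ∀ x, σ (σ x) = x

namespace PosetInv

variable {P : Type} [PartialOrder P]

/-- The equivalence relation whose classes are `{x, σ x}`. -/
def r (I : PosetInv P) (x y : P) : Prop := y = x ∨ y = I.σ x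

theorem r_refl (I : PosetInv P) (x : P) : I.r x x := Or.inl rfl

theorem r_symm (I : PosetInv P) {x y : P} (h : I.r x y) : I.r y x := by
  rcases h with rfl | rfl
  · exact Or.inl rfl
  · exact Or.inr (I.invol x).symm

theorem r_trans (I : PosetInv P) {x y z : P} (h1 : I.r x y) (h2 : I.r y z) : I.r x z := by
  rcases h1 with rfl | rfl
  · exact h2
  · rcases h2 with rfl | rfl
    · exact Or.inr rfl
    · rw [I.invol]; exact Or.inl rfl

def setoid (I : PosetInv P) : Setoid P := ⟨I.r, ⟨I.r_refl, I.r_symm, I.r_trans⟩⟩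

/-- The set `θ` of equivalence classes. -/
def Classes (I : PosetInv P) : Type := Quotient I.setoid

/-- The class `[x]` of an element. -/
def cls (I : PosetInv P) (x : P) : I.Classes := Quotient.mk I.setoid x

/-- The underlying set of elements of a class. -/
def carrier (I : PosetInv P) : I.Classes → Set P :=
  Quotient.lift (fun x => {y | I.r x y}) (by
    intro a b hab
    ext y
    constructor
    · intro h; exact I.r_trans (I.r_symm hab) h
    · intro h; exact I.r_trans hab h)

theorem mem_cls (I : PosetInv P) (x : P) : x ∈ I.carrier (I.cls x) := I.r_refl x

theorem sigma_mem_cls (I : PosetInv P) (x : P) : I.σ x ∈ I.carrier (I.cls x) := Or.inr rfl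

end PosetInv

open PosetInv

/-- A vector-space representation `V = (V₀, V_z)_{z ∈ θ}` of the poset with involution
`(P, θ)`:  a finite-dimensional space `V₀` together with, for each class `z`, a subspace
`V_z ⊆ V₀^z` (functions on the class), satisfying `V_y⁺ ⊆ V_x⁻` for `y < x`. -/
structure RepI (k : Type) [Field k] {P : Type} [PartialOrder P] (I : PosetInv P) where
  V0 : Type
  [acg : AddCommGroup V0]
  [mod : Module k V0]
  [fd : FiniteDimensional k V0]
  Vz : ∀ z : I.Classes, Submodule k (↥(I.carrier z) → V0)
  compat : ∀ ⦃x y : P⦄, y < x → ∀ h ∈ Vz (I.cls y),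
    (fun w : ↥(I.carrier (I.cls x)) => if (w : P) = x then h ⟨y, I.mem_cls y⟩ else 0)
      ∈ Vz (I.cls x)

attribute [instance] RepI.acg RepI.mod RepI.fd

variable {k : Type} [Field k] {P : Type} [PartialOrder P] {I : PosetInv P}

/-- A morphism of representations:  a linear map `φ : V₀ → W₀` with `φ^z(V_z) ⊆ W_z`. -/
@[ext]
structure Hom (V W : RepI k I) where
  φ : V.V0 →ₗ[k] W.V0
  maps : ∀ z, ∀ h ∈ V.Vz z, (fun w => φ (h w)) ∈ W.Vz z

namespace Hom

def comp {U V W : RepI k I} (g : Hom V W) (f : Hom U V) : Hom U W :=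
  ⟨g.φ ∘ₗ f.φ, fun z h hh => g.maps z _ (f.maps z h hh)⟩

def idH (V : RepI k I) : Hom V V := ⟨LinearMap.id, fun _ _ hh => hh⟩

def zeroH (V W : RepI k I) : Hom V W :=
  ⟨0, fun z _ _ => (W.Vz z).zero_mem⟩

end Hom

/-- `f` is a proper epimorphism:  surjective on `V₀` and on each `V_z`. -/
def ProperEpi {V W : RepI k I} (f : Hom V W) : Prop :=
  Function.Surjective f.φ ∧
    ∀ z, ∀ g ∈ W.Vz z, ∃ h ∈ V.Vz z, (fun w => f.φ (h w)) = g

/-- `f` is a proper monomorphism:  injective on `U₀`, and the elements of `V_z` all of whose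
coordinates lie in the image of `f` are exactly the images of elements of `U_z`. -/
def ProperMono {U V : RepI k I} (f : Hom U V) : Prop :=
  Function.Injective f.φ ∧
    ∀ z, ∀ h ∈ V.Vz z, (∀ w, h w ∈ LinearMap.range f.φ) →
      ∃ g ∈ U.Vz z, (fun w => f.φ (g w)) = h

/-- `(u, v)` is an `ε`-sequence:  `0 → U₀ → V₀ → W₀ → 0` and each
`0 → U_z → V_z → W_z → 0` is exact. -/
def IsEpsSeq {U V W : RepI k I} (u : Hom U V) (v : Hom V W) : Prop :=
  Function.Injective u.φ ∧ Function.Surjective v.φ ∧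
    LinearMap.range u.φ = LinearMap.ker v.φ ∧
    ∀ z, (∀ h ∈ W.Vz z, ∃ g ∈ V.Vz z, (fun w => v.φ (g w)) = h) ∧
      (∀ g ∈ V.Vz z, (fun w => v.φ (g w)) = 0 →
        ∃ p ∈ U.Vz z, (fun w => u.φ (p w)) = g)

variable {k : Type} [Field k] {P : Type} [PartialOrder P]

/-- The generating set of `P(w)_z` for a class `z = (a₁, b₁)`:  the functions
`(λ(a,a₁)e₁, 0), (0, λ(a,b₁)e₁), (λ(b,a₁)e₂, 0), (0, λ(b,b₁)e₂)`, where `e_c = g c` for `c`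
in the class of `a`; i.e. all `i_{x'} (g c)` with `c < x'`. -/
def genset (I : PosetInv P) (a : P) {V0 : Type} [AddCommGroup V0]
    (g : ↥(I.carrier (I.cls a)) → V0) (z : I.Classes) : Set (↥(I.carrier z) → V0) :=
  {f | ∃ (x' : ↥(I.carrier z)) (c : ↥(I.carrier (I.cls a))),
    (c : P) < (x' : P) ∧ f = fun w => if w = x' then g c else 0}

/-- `Q` is (isomorphic to) the representation `P(w)` for the class `w = [a]`:  there is a
basis of `Q₀` indexed by the class of `a` (so `e₁ = B a`, `e₂ = B b`, or a single `e` for a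
singleton class), `Q_w` is spanned by the generator `B` together with `genset`, and every
other `Q_z` is spanned by `genset`. -/
def IsPw {I : PosetInv P} (Q : RepI k I) (a : P) : Prop :=
  ∃ B : Module.Basis ↥(I.carrier (I.cls a)) k Q.V0,
    Q.Vz (I.cls a) = Submodule.span k ({⇑B} ∪ genset I a ⇑B (I.cls a)) ∧
    ∀ z, z ≠ I.cls a → Q.Vz z = Submodule.span k (genset I a ⇑B z)

/-!
An endomorphism `φ` of `P(w)` is determined by `φ ∘ B`, which must lie in
`P(w)_w = span ({B} ∪ genset)`. Inside the class `w = {a, b}` the set `genset` is empty when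
`a, b` are incomparable and is the single function `e_b ↦ e_a` when `a < b`; so `φ` is a scalar,
respectively `φ = c + d N` with `N : e_b ↦ e_a, e_a ↦ 0` (symmetrically when `b < a`).
Conversely `N` preserves every `P(w)_z`, because it sends a generator `i_{x'}(e_b)` (with
`b < x'`) to `i_{x'}(e_a)` and `a < b < x'`. Since `N² = 0`, an idempotent `c + d N` has
`c ∈ {0, 1}` and `d = 0`.
-/

lemma comp_mem_span_of_forall_mem {ι V W : Type} [AddCommGroup V] [Module k V]
    [AddCommGroup W] [Module k W] (φ : V →ₗ[k] W) {S : Set (ι → V)} {T : Set (ι → W)}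
    (hST : ∀ g ∈ S, (fun w => φ (g w)) ∈ Submodule.span k T) {h : ι → V}
    (hh : h ∈ Submodule.span k S) : (fun w => φ (h w)) ∈ Submodule.span k T :=
  (Submodule.span_le (p := (Submodule.span k T).comap (φ.compLeft ι))).mpr hST hh

lemma IsIdempotentElem.eq_zero_of_triangular {V : Type} [AddCommGroup V] [Module k V]
    {φ : Module.End k V} (hφ : IsIdempotentElem φ) {u v : V} (hu : u ≠ 0) {c d : k}
    (hφu : φ u = c • u) (hφv : φ v = c • v + d • u) : d = 0 := by
  have hc : IsIdempotentElem c := by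
    have h := LinearMap.congr_fun hφ u
    rw [Module.End.mul_apply, hφu, map_smul, hφu, smul_smul] at h
    exact smul_left_injective k hu h
  have h := LinearMap.congr_fun hφ v
  rw [Module.End.mul_apply, hφv, map_add, map_smul, map_smul, hφv, hφu] at h
  -- `φ² v = c v + 2cd u`, so `2cd = d` in addition to `c² = c`
  rcases IsIdempotentElem.iff_eq_zero_or_one.mp hc with rfl | rfl
  · exact (smul_eq_zero.mp (by simpa using h.symm)).resolve_right hu
  · exact (smul_eq_zero.mp (by simpa [add_assoc] using h)).resolve_right hu

section Rep

variable {P : Type} [PartialOrder P] {I : PosetInv P}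

def RepI.endSubmodule (V : RepI k I) : Submodule k (Module.End k V.V0) where
  carrier := {φ | ∀ z, ∀ h ∈ V.Vz z, (fun w => φ (h w)) ∈ V.Vz z}
  zero_mem' _ _ _ := zero_mem _
  add_mem' hφ hψ z h hh := add_mem (hφ z h hh) (hψ z h hh)
  smul_mem' c _ hφ z h hh := (V.Vz z).smul_mem c (hφ z h hh)

lemma RepI.id_mem_endSubmodule (V : RepI k I) : LinearMap.id ∈ V.endSubmodule :=
  fun _ _ hh => hh

namespace Hom

variable {V : RepI k I}

lemma isIdempotentElem_φ {f : Hom V V} (hf : f.comp f = f) : IsIdempotentElem f.φ :=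
  congrArg Hom.φ hf

lemma eq_zeroH_or_eq_idH_of_eq_smul [Nontrivial V.V0] {f : Hom V V} (hf : f.comp f = f)
    {c : k} (hc : f.φ = c • LinearMap.id) : f = zeroH V V ∨ f = idH V := by
  obtain ⟨x, hx⟩ := exists_ne (0 : V.V0)
  have hcc : IsIdempotentElem c := by
    have h := LinearMap.congr_fun (isIdempotentElem_φ hf) x
    rw [hc, Module.End.mul_apply, LinearMap.smul_apply, LinearMap.id_apply,
      LinearMap.smul_apply, LinearMap.id_apply, smul_smul] at h
    exact smul_left_injective k hx h
  rcases IsIdempotentElem.iff_eq_zero_or_one.mp hcc with rfl | rfl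
  · exact Or.inl (Hom.ext (by simpa [zeroH] using hc))
  · exact Or.inr (Hom.ext (by simpa [idH] using hc))

end Hom

lemma eq_and_eq_of_lt_of_lt {a : P} {c x p q : I.carrier (I.cls a)} (hcx : (c : P) < x)
    (hpq : (p : P) < q) : c = p ∧ x = q := by
  obtain ⟨c, rfl | rfl⟩ := c <;> obtain ⟨x, rfl | rfl⟩ := x <;>
    obtain ⟨p, rfl | rfl⟩ := p <;> obtain ⟨q, rfl | rfl⟩ := q <;>
    simp_all [lt_asymm]

lemma lt_or_lt_of_lt {a : P} {c x : I.carrier (I.cls a)} (hcx : (c : P) < x) :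
    a < I.σ a ∨ I.σ a < a := by
  obtain ⟨c, rfl | rfl⟩ := c <;> obtain ⟨x, rfl | rfl⟩ := x <;> simp_all

lemma eq_or_eq_of_lt {a : P} {p q : I.carrier (I.cls a)} (hpq : (p : P) < q)
    (w : I.carrier (I.cls a)) : w = p ∨ w = q := by
  obtain ⟨w, rfl | rfl⟩ := w <;> obtain ⟨p, rfl | rfl⟩ := p <;>
    obtain ⟨q, rfl | rfl⟩ := q <;> simp_all

lemma genset_cls_eq_empty {a : P} {V0 : Type} [AddCommGroup V0] (g : I.carrier (I.cls a) → V0)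
    (h₁ : ¬ a < I.σ a) (h₂ : ¬ I.σ a < a) : genset I a g (I.cls a) = ∅ := by
  refine Set.eq_empty_of_forall_notMem ?_
  rintro _ ⟨x', c, hcx, -⟩
  exact (lt_or_lt_of_lt hcx).elim h₁ h₂

lemma genset_cls_eq_singleton {a : P} {V0 : Type} [AddCommGroup V0]
    (g : I.carrier (I.cls a) → V0) {p q : I.carrier (I.cls a)} (hpq : (p : P) < q) :
    genset I a g (I.cls a) = {fun w => if w = q then g p else 0} := by
  ext f
  constructor
  · rintro ⟨x', c, hcx, rfl⟩
    obtain ⟨rfl, rfl⟩ := eq_and_eq_of_lt_of_lt hcx hpq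
    rfl
  · rintro rfl
    exact ⟨q, p, hpq, rfl⟩

section Pw

variable {a : P} (Q : RepI k I) (B : Module.Basis (I.carrier (I.cls a)) k Q.V0)
  (hw : Q.Vz (I.cls a) = Submodule.span k ({⇑B} ∪ genset I a ⇑B (I.cls a)))
include hw

lemma Hom.comp_basis_mem_span (f : Hom Q Q) :
    (fun w => f.φ (B w)) ∈ Submodule.span k ({⇑B} ∪ genset I a ⇑B (I.cls a)) :=
  hw ▸ f.maps _ _ (hw ▸ Submodule.subset_span (Or.inl rfl))

lemma Hom.exists_eq_smul_id_of_incomparable (h₁ : ¬ a < I.σ a) (h₂ : ¬ I.σ a < a)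
    (f : Hom Q Q) : ∃ c : k, f.φ = c • LinearMap.id := by
  have h := f.comp_basis_mem_span Q B hw
  rw [genset_cls_eq_empty _ h₁ h₂, Set.union_empty] at h
  obtain ⟨c, hc⟩ := Submodule.mem_span_singleton.mp h
  exact ⟨c, B.ext fun w => by simpa using (congrFun hc w).symm⟩

lemma Hom.exists_triangular_of_lt {p q : I.carrier (I.cls a)} (hpq : (p : P) < q)
    (f : Hom Q Q) : ∃ c d : k, f.φ (B p) = c • B p ∧ f.φ (B q) = c • B q + d • B p := by
  have h := f.comp_basis_mem_span Q B hw
  rw [genset_cls_eq_singleton _ hpq, Set.singleton_union] at h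
  obtain ⟨c, d, hcd⟩ := Submodule.mem_span_pair.mp h
  have hpq' : p ≠ q := fun h => hpq.ne (congrArg Subtype.val h)
  refine ⟨c, d, ?_, ?_⟩
  · simpa [hpq'] using (congrFun hcd p).symm
  · simpa using (congrFun hcd q).symm

lemma Hom.exists_eq_smul_id_of_idempotent_of_lt {p q : I.carrier (I.cls a)}
    (hpq : (p : P) < q) {f : Hom Q Q} (hf : f.comp f = f) : ∃ c : k, f.φ = c • LinearMap.id := by
  obtain ⟨c, d, hp, hq⟩ := f.exists_triangular_of_lt Q B hw hpq
  obtain rfl := (isIdempotentElem_φ hf).eq_zero_of_triangular (B.ne_zero p) hp hq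
  refine ⟨c, B.ext fun w => ?_⟩
  rcases eq_or_eq_of_lt hpq w with rfl | rfl <;> simp [hp, hq]

lemma Hom.exists_eq_smul_id_of_idempotent {f : Hom Q Q} (hf : f.comp f = f) :
    ∃ c : k, f.φ = c • LinearMap.id := by
  by_cases h₁ : a < I.σ a
  · exact f.exists_eq_smul_id_of_idempotent_of_lt Q B hw
      (p := ⟨a, I.mem_cls a⟩) (q := ⟨_, I.sigma_mem_cls a⟩) h₁ hf
  by_cases h₂ : I.σ a < a
  · exact f.exists_eq_smul_id_of_idempotent_of_lt Q B hw
      (p := ⟨_, I.sigma_mem_cls a⟩) (q := ⟨a, I.mem_cls a⟩) h₂ hf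
  exact f.exists_eq_smul_id_of_incomparable Q B hw h₁ h₂

variable (hz : ∀ z, z ≠ I.cls a → Q.Vz z = Submodule.span k (genset I a ⇑B z))
include hz

lemma constr_single_mem_endSubmodule {p q : I.carrier (I.cls a)} (hpq : (p : P) < q) :
    B.constr k (fun w => if w = q then B p else 0) ∈ Q.endSubmodule := by
  set N := B.constr k (fun w => if w = q then B p else 0)
  have hNB : ∀ c, N (B c) = if c = q then B p else 0 := fun c => B.constr_basis k _ c
  have hgen : ∀ z, ∀ g ∈ genset I a ⇑B z,
      (fun w => N (g w)) ∈ Submodule.span k (genset I a ⇑B z) := by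
    rintro z _ ⟨x', c, hcx, rfl⟩
    by_cases hc : c = q
    · subst hc
      refine Submodule.subset_span ⟨x', p, hpq.trans hcx, funext fun w => ?_⟩
      by_cases hw' : w = x' <;> simp [hw', hNB]
    · rw [show (fun w => N (if w = x' then B c else 0)) = 0 from
        funext fun w => by by_cases hw' : w = x' <;> simp [hw', hNB, hc]]
      exact zero_mem _
  intro z
  by_cases hza : z = I.cls a
  · subst hza
    rw [hw]
    refine fun h => comp_mem_span_of_forall_mem N ?_
    rintro g (rfl | hg)
    · exact Submodule.subset_span (Or.inr ⟨q, p, hpq, funext hNB⟩)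
    · exact Submodule.span_mono Set.subset_union_right (hgen _ g hg)
  · rw [hz z hza]
    exact fun h => comp_mem_span_of_forall_mem N (hgen z)

lemma exists_hom_triangular_of_lt {p q : I.carrier (I.cls a)} (hpq : (p : P) < q) (c d : k) :
    ∃ f : Hom Q Q, f.φ (B p) = c • B p ∧ f.φ (B q) = c • B q + d • B p := by
  have hN := constr_single_mem_endSubmodule Q B hw hz hpq
  have hpq' : p ≠ q := fun h => hpq.ne (congrArg Subtype.val h)
  refine ⟨⟨c • LinearMap.id + d • _,
    add_mem (Submodule.smul_mem _ c Q.id_mem_endSubmodule) (Submodule.smul_mem _ d hN)⟩, ?_, ?_⟩ <;>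
    simp [B.constr_basis, hpq']

end Pw

end Rep


theorem Pw_endomorphisms
    {k : Type} [Field k] {P : Type} [PartialOrder P] {I : PosetInv P}
    (a : P) (Q : RepI k I) (B : Module.Basis ↥(I.carrier (I.cls a)) k Q.V0)
    (hw : Q.Vz (I.cls a) = Submodule.span k ({⇑B} ∪ genset I a ⇑B (I.cls a)))
    (hz : ∀ z, z ≠ I.cls a → Q.Vz z = Submodule.span k (genset I a ⇑B z)) :
    -- incomparable (or singleton) case: `End P(w) ≅ k`
    ((¬ a < I.σ a ∧ ¬ I.σ a < a) →
      ((∀ f : Hom Q Q, ∃ c : k, f.φ = c • LinearMap.id) ∧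
        ∀ c : k, ∃ f : Hom Q Q, f.φ = c • LinearMap.id)) ∧
    -- case `a < b`:  `End P(w) ≅ k[x]/(x²)`
    (a < I.σ a →
      ((∀ f : Hom Q Q, ∃ c d : k,
          f.φ (B ⟨a, I.mem_cls a⟩) = c • B ⟨a, I.mem_cls a⟩ ∧
          f.φ (B ⟨I.σ a, I.sigma_mem_cls a⟩)
            = c • B ⟨I.σ a, I.sigma_mem_cls a⟩ + d • B ⟨a, I.mem_cls a⟩) ∧
        ∀ c d : k, ∃ f : Hom Q Q,
          f.φ (B ⟨a, I.mem_cls a⟩) = c • B ⟨a, I.mem_cls a⟩ ∧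
          f.φ (B ⟨I.σ a, I.sigma_mem_cls a⟩)
            = c • B ⟨I.σ a, I.sigma_mem_cls a⟩ + d • B ⟨a, I.mem_cls a⟩)) ∧
    -- consequently `P(w)` is indecomposable
    (∀ f : Hom Q Q, Hom.comp f f = f → f = Hom.zeroH Q Q ∨ f = Hom.idH Q) := by
  refine ⟨fun ⟨h₁, h₂⟩ => ⟨Hom.exists_eq_smul_id_of_incomparable Q B hw h₁ h₂, fun c => ?_⟩,
    fun hab => ⟨Hom.exists_triangular_of_lt Q B hw hab,
      exists_hom_triangular_of_lt Q B hw hz hab⟩, fun f hf => ?_⟩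
  · exact ⟨⟨_, Submodule.smul_mem _ c Q.id_mem_endSubmodule⟩, rfl⟩
  · have : Nontrivial Q.V0 := nontrivial_of_ne _ _ (B.ne_zero ⟨a, I.mem_cls a⟩)
    obtain ⟨c, hc⟩ := f.exists_eq_smul_id_of_idempotent Q B hw hf
    exact Hom.eq_zeroH_or_eq_idH_of_eq_smul hf hc
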